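/- Let X be a general quartic threefold in ℙ^4 and let g: Y → B be the universal family of lines on X with evaluation map f: Y → X, where Y = ℙ_B(E) is a ℙ^1-bundle over a smooth curve B and ξ denotes a divisor class with O_{Y/B}(1) = O_Y(ξ). If F denotes a fiber of g, then −f^*K_X is numerically equivalent to ξ + 160F − (1/2)g^*c_1(E), and consequently K_{Y/B} − 2f^*K_X is numerically equivalent to 320F. -/
import Mathlib


/-- Numerical classes on the universal family of lines `Y = ℙ_B(E)` on a
general quartic threefold `X ⊂ ℙ⁴`, with its ℙ¹-bundle map `g : Y → B` and
evaluation map `f : Y → X`.  We work in the ℚ-vector space `V` of numerical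
classes of divisors on `Y`, with the intersection pairing `dot`.  Here `ξ` is
the class with `O_{Y/B}(1) = O_Y(ξ)`, `F` is the class of a fiber of `g`,
`KYB` is the relative canonical class `K_{Y/B}`, `gc1E = g^*c_1(E)`, and
`fKX = f^*K_X`.

Given the standard relations — `K_{Y/B} ≡ g^*c_1(E) − 2ξ`; `g^*c_1(E)` is a
multiple of the fiber class; `F² = 0`; `ξ·F = 1`; `ξ² = ξ·g^*c_1(E)`;
`−f^*K_X` lies in the span of `F` and `ξ`; `−f^*K_X·F = 1` and
`(−f^*K_X)² = 320` — we conclude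
`−f^*K_X ≡ ξ + 160F − ½ g^*c_1(E)` and `K_{Y/B} − 2f^*K_X ≡ 320F`. -/
theorem quartic_threefold_line_family_numerical_relations
    (V : Type) [AddCommGroup V] [Module ℚ V]
    (dot : V →ₗ[ℚ] V →ₗ[ℚ] ℚ)
    (ξ F KYB gc1E fKX : V)
    (hKYB : KYB = gc1E - (2 : ℚ) • ξ)
    (hgc1E : ∃ c : ℚ, gc1E = c • F)
    (hFF : dot F F = 0)
    (hxiF : dot ξ F = 1)
    (hspan : ∃ a b : ℚ, -fKX = a • F + b • ξ)
    (hdegF : dot (-fKX) F = 1)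
    (hsq : dot (-fKX) (-fKX) = 320)
    (hxixi : dot ξ ξ = dot ξ gc1E)
    (hsymm : ∀ u v : V, dot u v = dot v u) :
    -fKX = ξ + (160 : ℚ) • F - (1 / 2 : ℚ) • gc1E
      ∧ KYB - (2 : ℚ) • fKX = (320 : ℚ) • F := by
  obtain ⟨c, hc⟩ := hgc1E
  obtain ⟨a, b, hab⟩ := hspan
  have hb : b = 1 := by
    have := hdegF
    rw [hab] at this
    simpa [map_add, map_smul, hFF, hxiF] using this
  subst hb
  have hxx : dot ξ ξ = c := by
    rw [hxixi, hc]
    simp [map_smul, hsymm F ξ, hxiF]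
  have ha : a = 160 - c / 2 := by
    have := hsq
    rw [hab] at this
    simp [map_add, map_smul, hFF, hxiF, hxx, hsymm F ξ] at this
    linarith
  have h1 : -fKX = ξ + (160 : ℚ) • F - (1 / 2 : ℚ) • gc1E := by
    rw [hab, ha, hc]
    module
  refine ⟨h1, ?_⟩
  have h2 : fKX = -(ξ + (160 : ℚ) • F - (1 / 2 : ℚ) • gc1E) := by
    rw [← h1]; abel
  rw [hKYB, h2, hc]
  module
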